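/- Let ℓ: ℝ × ℝ → ℝ be a loss function such that ℓ(y,·) is convex for every y, and let λ > 0. Then the optimal value of the ℓ₂-regularized cardinality-penalized problem, inf over w ∈ ℝ^p of Σ_{i=1}^n ℓ(y_i, x_iᵀw) + (1/(2γ))‖w‖₂² + λ‖w‖₀, equals inf over s ∈ {0,1}^p of sup_{α ∈ ℝ^n} (f(α,s) + λ Σ_{j=1}^p s_j) (equality of values in the extended reals). -/

import Mathlib

/-!
For a support pattern `s ∈ {0,1}^p`, `sup_α f(α, s)` is the Fenchel dual of ridge regression with
design matrix `X · diag s`, whose optimal value is the least ridge objective over the `w` supported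
in `s` (coordinates outside `s` only add to the ridge term). For such `w` the penalty `λ ∑ s_j`
dominates `λ ‖w‖₀`, with equality when `s` is the support of `w`.

Strong duality for `min_w ∑ ℓ_i((A w)_i) + ‖w‖² / (2γ)` comes from the value function
`h(u) = inf_w ∑ ℓ_i(u_i + (A w)_i) + ‖w‖² / (2γ)`. It is convex, and finite because every `ℓ_i` has
an affine minorant while the ridge term dominates any linear function of `w`; a subgradient `α` of
`h` at `0`, i.e. a supporting hyperplane of its epigraph, is a dual vector attaining the primal
value.
-/

open scoped BigOperators

open Classical in
/-- The `ℓ₀` pseudo-norm: the number of nonzero entries of `w`. -/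
noncomputable def norm0 {p : ℕ} (w : Fin p → ℝ) : ℕ :=
  (Finset.univ.filter fun j => w j ≠ 0).card

open Set Matrix

theorem ConvexOn.exists_subgradient {E : Type*} [NormedAddCommGroup E] [NormedSpace ℝ E]
    [FiniteDimensional ℝ E] {f : E → ℝ} (hf : ConvexOn ℝ univ f) (x₀ : E) :
    ∃ g : E →L[ℝ] ℝ, ∀ x, f x₀ + g (x - x₀) ≤ f x := by
  set A : Set (E × ℝ) := {p | p.1 ∈ univ ∧ f p.1 < p.2}
  have hA : IsOpen A := by
    simpa [A] using isOpen_lt (hf.locallyLipschitz.continuous.comp continuous_fst) continuous_snd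
  obtain ⟨φ, hφ⟩ := geometric_hahn_banach_open_point hf.convex_strict_epigraph hA
    (by simp [A] : (x₀, f x₀) ∉ A)
  set L : E →L[ℝ] ℝ := φ.comp (ContinuousLinearMap.inl ℝ E ℝ)
  set c := φ (0, 1)
  have hφ_apply : ∀ x t, φ (x, t) = L x + t * c := fun x t => by
    have : (x, t) = (x, 0) + t • ((0 : E), (1 : ℝ)) := by ext <;> simp
    rw [this, map_add, map_smul, smul_eq_mul]
    rfl
  have hc : c < 0 := by
    have := hφ (x₀, f x₀ + 1) ⟨trivial, by simp⟩
    rw [hφ_apply, hφ_apply] at this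
    linarith
  have hsupport : ∀ x, L x + f x * c ≤ L x₀ + f x₀ * c := fun x => by
    refine le_of_forall_pos_le_add fun ε hε => ?_
    have := hφ (x, f x + ε / -c) ⟨trivial, lt_add_of_pos_right _ (div_pos hε (neg_pos.2 hc))⟩
    rw [hφ_apply, hφ_apply, add_mul, div_mul_eq_mul_div, div_neg, mul_div_cancel_right₀ _ hc.ne]
      at this
    linarith
  refine ⟨(-c)⁻¹ • L, fun x => ?_⟩
  have : (-c)⁻¹ * (L x - L x₀) ≤ f x - f x₀ := by
    rw [inv_mul_le_iff₀ (neg_pos.2 hc)]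
    linarith [hsupport x]
  have hg : ((-c)⁻¹ • L) (x - x₀) = (-c)⁻¹ * (L x - L x₀) := by
    rw [_root_.smul_apply, map_sub, smul_eq_mul]
  linarith

theorem ConvexOn.exists_affine_le {g : ℝ → ℝ} (hg : ConvexOn ℝ univ g) :
    ∃ β : ℝ, ∀ v, g 0 + β * v ≤ g v := by
  obtain ⟨G, hG⟩ := hg.exists_subgradient 0
  refine ⟨G 1, fun v => ?_⟩
  have hG_apply : G v = G 1 * v := by
    rw [mul_comm, ← smul_eq_mul, ← G.map_smul, smul_eq_mul, mul_one]
  simpa [hG_apply] using hG v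

theorem neg_sum_sq_le_dotProduct_add {κ : Type*} [Fintype κ] {γ : ℝ} (hγ : 0 < γ)
    (t w : κ → ℝ) : -(γ / 2 * ∑ j, t j ^ 2) ≤ t ⬝ᵥ w + 1 / (2 * γ) * ∑ j, w j ^ 2 := by
  have hterm : ∀ j, 0 ≤ t j * w j + 1 / (2 * γ) * w j ^ 2 + γ / 2 * t j ^ 2 := fun j => by
    have : t j * w j + 1 / (2 * γ) * w j ^ 2 + γ / 2 * t j ^ 2 = (w j + γ * t j) ^ 2 / (2 * γ) := by
      field_simp
      ring
    rw [this]
    positivity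
  have := Finset.sum_nonneg fun j (_ : j ∈ Finset.univ) => hterm j
  simp only [Finset.sum_add_distrib, ← Finset.mul_sum] at this
  rw [dotProduct]
  linarith

theorem dotProduct_neg_smul_add_sum_sq {κ : Type*} [Fintype κ] {γ : ℝ} (hγ : γ ≠ 0)
    (t : κ → ℝ) : t ⬝ᵥ (-γ • t) + 1 / (2 * γ) * ∑ j, (-γ • t) j ^ 2 = -(γ / 2 * ∑ j, t j ^ 2) := by
  simp only [dotProduct, Pi.smul_apply, smul_eq_mul, Finset.mul_sum, ← Finset.sum_add_distrib,
    ← Finset.sum_neg_distrib]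
  refine Finset.sum_congr rfl fun j _ => ?_
  field_simp
  ring

theorem EReal.coe_finsetSum {ι : Type*} (s : Finset ι) (g : ι → ℝ) :
    ((∑ i ∈ s, g i : ℝ) : EReal) = ∑ i ∈ s, (g i : EReal) :=
  map_sum (⟨⟨(↑), EReal.coe_zero⟩, EReal.coe_add⟩ : ℝ →+ EReal) g s

theorem EReal.sum_iSup_coe_le {ι κ : Type*} [Nonempty κ] (s : Finset ι) (g : ι → κ → ℝ) {B : ℝ}
    (h : ∀ v : ι → κ, ∑ i ∈ s, g i (v i) ≤ B) : ∑ i ∈ s, ⨆ x, (g i x : EReal) ≤ B := by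
  classical
  induction s using Finset.induction_on generalizing B with
  | empty => simpa using h fun _ => Classical.arbitrary κ
  | insert a s ha ih =>
    rw [Finset.sum_insert ha]
    refine EReal.add_le_of_forall_lt fun a' ha' b' hb' => ?_
    obtain ⟨x, hx⟩ := lt_iSup_iff.1 ha'
    have hrest : ∑ i ∈ s, ⨆ x, (g i x : EReal) ≤ ((B - g a x : ℝ) : EReal) := ih fun v => by
      have := h (Function.update v a x)
      rw [Finset.sum_insert ha, Function.update_self,
        Finset.sum_congr rfl fun i hi => by rw [Function.update_of_ne (ne_of_mem_of_not_mem hi ha)]]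
        at this
      linarith
    calc a' + b' ≤ (g a x : EReal) + ((B - g a x : ℝ) : EReal) :=
          add_le_add hx.le (hb'.le.trans hrest)
      _ = B := by rw [← EReal.coe_add, add_sub_cancel]

theorem EReal.iSup_add_coe {ι : Sort*} (g : ι → EReal) (c : ℝ) :
    ⨆ i, (g i + c) = (⨆ i, g i) + c :=
  le_antisymm (iSup_le fun i => add_le_add_left (le_iSup g i) _)
    (EReal.add_le_of_forall_lt fun a ha b hb => by
      obtain ⟨i, hi⟩ := lt_iSup_iff.1 ha
      exact (add_le_add hi.le hb.le).trans (le_iSup (fun i => g i + c) i))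

theorem EReal.iInf_add_coe {ι : Sort*} (g : ι → EReal) (c : ℝ) :
    ⨅ i, (g i + c) = (⨅ i, g i) + c :=
  le_antisymm
    (EReal.le_add_of_forall_gt (Or.inr (EReal.coe_ne_top c)) (Or.inr (EReal.coe_ne_bot c))
      fun a ha b hb => by
        obtain ⟨i, hi⟩ := iInf_lt_iff.1 ha
        exact (iInf_le (fun i => g i + c) i).trans (add_le_add hi.le hb.le))
    (le_iInf fun i => add_le_add_left (iInf_le g i) _)

theorem ConvexOn.ciInf_snd {E F : Type*} [AddCommGroup E] [Module ℝ E] [AddCommGroup F]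
    [Module ℝ F] [Nonempty F] {Φ : E → F → ℝ} (hΦ : ConvexOn ℝ univ (Function.uncurry Φ))
    (hbdd : ∀ u, BddBelow (range (Φ u))) : ConvexOn ℝ univ fun u => ⨅ w, Φ u w := by
  refine ⟨convex_univ, fun u _ u' _ a b ha hb hab => ?_⟩
  refine le_of_forall_pos_le_add fun ε hε => ?_
  obtain ⟨w, hw⟩ := exists_lt_of_ciInf_lt (lt_add_of_pos_right (⨅ w, Φ u w) hε)
  obtain ⟨w', hw'⟩ := exists_lt_of_ciInf_lt (lt_add_of_pos_right (⨅ w, Φ u' w) hε)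
  calc ⨅ z, Φ (a • u + b • u') z ≤ Φ (a • u + b • u') (a • w + b • w') := ciInf_le (hbdd _) _
    _ ≤ a * Φ u w + b * Φ u' w' := hΦ.2 (mem_univ (u, w)) (mem_univ (u', w')) ha hb hab
    _ ≤ a * ((⨅ w, Φ u w) + ε) + b * ((⨅ w, Φ u' w) + ε) := by gcongr
    _ = a * (⨅ w, Φ u w) + b * (⨅ w, Φ u' w) + ε := by linear_combination ε * hab

theorem ConvexOn.finsetSum {E ι : Type*} [AddCommGroup E] [Module ℝ E] {s : Set E}
    (hs : Convex ℝ s) (t : Finset ι) {f : ι → E → ℝ} (hf : ∀ i ∈ t, ConvexOn ℝ s (f i)) :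
    ConvexOn ℝ s fun x => ∑ i ∈ t, f i x := by
  have := Finset.sum_induction f (ConvexOn ℝ s) (fun _ _ => ConvexOn.add) (convexOn_const 0 hs) hf
  simpa only [← Finset.sum_apply] using this

noncomputable def fenchelConj (g : ℝ → ℝ) (a : ℝ) : EReal :=
  ⨆ u : ℝ, ((u * a - g u : ℝ) : EReal)

section Ridge

variable {ι κ : Type*} [Fintype ι] [Fintype κ] (A : Matrix ι κ ℝ) (ℓ : ι → ℝ → ℝ) (γ : ℝ)

noncomputable def ridgeObjective (w : κ → ℝ) : ℝ :=
  ∑ i, ℓ i ((A *ᵥ w) i) + 1 / (2 * γ) * ∑ j, w j ^ 2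

noncomputable def ridgePerturbed (u : ι → ℝ) (w : κ → ℝ) : ℝ :=
  ∑ i, ℓ i (u i + (A *ᵥ w) i) + 1 / (2 * γ) * ∑ j, w j ^ 2

noncomputable def ridgeDual (α : ι → ℝ) : EReal :=
  -(∑ i, fenchelConj (ℓ i) (α i)) - ((γ / 2 * ∑ j, (Aᵀ *ᵥ α) j ^ 2 : ℝ) : EReal)

variable {A ℓ γ}

theorem ridgePerturbed_zero : ridgePerturbed A ℓ γ 0 = ridgeObjective A ℓ γ := by
  funext w
  simp [ridgePerturbed, ridgeObjective]

theorem convexOn_ridgePerturbed (hℓ : ∀ i, ConvexOn ℝ univ (ℓ i)) (hγ : 0 ≤ γ) :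
    ConvexOn ℝ univ (Function.uncurry (ridgePerturbed A ℓ γ)) := by
  have hloss : ∀ i, ConvexOn ℝ univ fun p : (ι → ℝ) × (κ → ℝ) => ℓ i (p.1 i + (A *ᵥ p.2) i) :=
    fun i => (hℓ i).comp_linearMap (LinearMap.proj i ∘ₗ LinearMap.fst ℝ (ι → ℝ) (κ → ℝ) +
      LinearMap.proj i ∘ₗ A.mulVecLin ∘ₗ LinearMap.snd ℝ (ι → ℝ) (κ → ℝ))
  have hsq : ∀ j, ConvexOn ℝ univ fun p : (ι → ℝ) × (κ → ℝ) => p.2 j ^ 2 := fun j =>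
    (even_two.convexOn_pow (𝕜 := ℝ)).comp_linearMap
      (LinearMap.proj (R := ℝ) (φ := fun _ : κ => ℝ) j ∘ₗ LinearMap.snd ℝ (ι → ℝ) (κ → ℝ))
  exact (ConvexOn.finsetSum convex_univ _ fun i _ => hloss i).add
    ((ConvexOn.finsetSum convex_univ _ fun j _ => hsq j).smul (by positivity))

theorem bddBelow_range_ridgePerturbed (hℓ : ∀ i, ConvexOn ℝ univ (ℓ i)) (hγ : 0 < γ)
    (u : ι → ℝ) : BddBelow (range (ridgePerturbed A ℓ γ u)) := by
  choose β hβ using fun i => (hℓ i).exists_affine_le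
  refine ⟨∑ i, (ℓ i 0 + β i * u i) - γ / 2 * ∑ j, (Aᵀ *ᵥ β) j ^ 2, ?_⟩
  rintro _ ⟨w, rfl⟩
  have hloss : ∑ i, (ℓ i 0 + β i * u i) + (Aᵀ *ᵥ β) ⬝ᵥ w ≤ ∑ i, ℓ i (u i + (A *ᵥ w) i) := by
    rw [dotProduct_comm, dotProduct_transpose_mulVec, dotProduct, ← Finset.sum_add_distrib]
    exact Finset.sum_le_sum fun i _ => by linarith [hβ i (u i + (A *ᵥ w) i)]
  have := neg_sum_sq_le_dotProduct_add hγ (Aᵀ *ᵥ β) w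
  rw [ridgePerturbed]
  linarith

theorem ridgeDual_le_ridgeObjective (hγ : 0 < γ) (α : ι → ℝ) (w : κ → ℝ) :
    ridgeDual A ℓ γ α ≤ ridgeObjective A ℓ γ w := by
  have hconj : ((∑ i, ((A *ᵥ w) i * α i - ℓ i ((A *ᵥ w) i)) : ℝ) : EReal) ≤
      ∑ i, fenchelConj (ℓ i) (α i) := by
    rw [EReal.coe_finsetSum]
    exact Finset.sum_le_sum fun i _ => le_iSup (fun u : ℝ => ((u * α i - ℓ i u : ℝ) : EReal)) _
  have hpair : ∑ i, (A *ᵥ w) i * α i = Aᵀ *ᵥ α ⬝ᵥ w := by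
    rw [dotProduct_comm, dotProduct_transpose_mulVec, dotProduct_comm]
    rfl
  calc ridgeDual A ℓ γ α
      ≤ ((-(∑ i, ((A *ᵥ w) i * α i - ℓ i ((A *ᵥ w) i))) - γ / 2 * ∑ j, (Aᵀ *ᵥ α) j ^ 2 : ℝ)
          : EReal) := by
        rw [EReal.coe_sub, EReal.coe_neg]
        exact EReal.sub_le_sub (EReal.neg_le_neg_iff.2 hconj) le_rfl
    _ ≤ ridgeObjective A ℓ γ w := by
        rw [EReal.coe_le_coe_iff, Finset.sum_sub_distrib, hpair, ridgeObjective]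
        linarith [neg_sum_sq_le_dotProduct_add hγ (Aᵀ *ᵥ α) w]

theorem exists_ridge_dual_certificate (hℓ : ∀ i, ConvexOn ℝ univ (ℓ i)) (hγ : 0 < γ) :
    ∃ α : ι → ℝ, ∀ v : ι → ℝ, ∑ i, (v i * α i - ℓ i (v i)) ≤
      -(⨅ w, ridgeObjective A ℓ γ w) - γ / 2 * ∑ j, (Aᵀ *ᵥ α) j ^ 2 := by
  classical
  set h : (ι → ℝ) → ℝ := fun u => ⨅ w, ridgePerturbed A ℓ γ u w
  have hh : ConvexOn ℝ univ h := (convexOn_ridgePerturbed hℓ hγ.le).ciInf_snd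
    (bddBelow_range_ridgePerturbed hℓ hγ)
  obtain ⟨G, hG⟩ := hh.exists_subgradient 0
  set α : ι → ℝ := fun i => G fun j => if i = j then 1 else 0
  have hGα : ∀ u, G u = u ⬝ᵥ α := fun u => by
    simpa [dotProduct] using LinearMap.pi_apply_eq_sum_univ (G : (ι → ℝ) →ₗ[ℝ] ℝ) u
  refine ⟨α, fun v => ?_⟩
  set t := Aᵀ *ᵥ α
  -- `w₀` minimises `t ⬝ᵥ w + ‖w‖² / (2γ)`
  set w₀ := -γ • t
  set u := v - A *ᵥ w₀
  have hsubgrad : h 0 + G u ≤ h u := by simpa using hG u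
  have hvalue_le : h u ≤ ridgePerturbed A ℓ γ u w₀ :=
    ciInf_le (bddBelow_range_ridgePerturbed hℓ hγ u) w₀
  have hperturbed : ridgePerturbed A ℓ γ u w₀ = ∑ i, ℓ i (v i) + 1 / (2 * γ) * ∑ j, w₀ j ^ 2 := by
    simp [ridgePerturbed, u]
  have hGu : G u = v ⬝ᵥ α - t ⬝ᵥ w₀ := by
    rw [hGα, sub_dotProduct, dotProduct_comm (A *ᵥ w₀), dotProduct_mulVec, ← mulVec_transpose]
  have hvalue_zero : h 0 = ⨅ w, ridgeObjective A ℓ γ w := by simp [h, ridgePerturbed_zero]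
  have hw₀ := dotProduct_neg_smul_add_sum_sq hγ.ne' t
  rw [Finset.sum_sub_distrib]
  change v ⬝ᵥ α - _ ≤ _
  linarith

theorem ridge_duality (hℓ : ∀ i, ConvexOn ℝ univ (ℓ i)) (hγ : 0 < γ) :
    ⨆ α, ridgeDual A ℓ γ α = ⨅ w, (ridgeObjective A ℓ γ w : EReal) := by
  refine le_antisymm (iSup_le fun α => le_iInf fun w => ridgeDual_le_ridgeObjective hγ α w) ?_
  obtain ⟨α, hα⟩ := exists_ridge_dual_certificate (A := A) hℓ hγ
  have hbdd : BddBelow (range (ridgeObjective A ℓ γ)) :=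
    ridgePerturbed_zero (A := A) ▸ bddBelow_range_ridgePerturbed hℓ hγ 0
  rw [← Monotone.map_ciInf_of_continuousAt continuous_coe_real_ereal.continuousAt
    EReal.coe_strictMono.monotone hbdd]
  refine le_trans ?_ (le_iSup _ α)
  set p := ⨅ w, ridgeObjective A ℓ γ w
  set q := γ / 2 * ∑ j, (Aᵀ *ᵥ α) j ^ 2
  have hconj := EReal.sum_iSup_coe_le Finset.univ (fun i u => u * α i - ℓ i u) hα
  calc (p : EReal) = -((-p - q : ℝ) : EReal) - (q : EReal) := by
        rw [← EReal.coe_neg, ← EReal.coe_sub]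
        ring_nf
    _ ≤ ridgeDual A ℓ γ α := EReal.sub_le_sub (EReal.neg_le_neg_iff.2 hconj) le_rfl

end Ridge

section SupportPattern

variable {ι κ : Type*} [Fintype κ] [DecidableEq κ] (X : Matrix ι κ ℝ) {s : κ → ℝ}

theorem mul_diagonal_mulVec (w : κ → ℝ) : (X * diagonal s) *ᵥ w = X *ᵥ (s * w) := by
  rw [← mulVec_mulVec]
  congr 1
  funext j
  exact mulVec_diagonal s w j

theorem sum_sq_transpose_mul_diagonal_mulVec [Fintype ι] (hs : ∀ j, s j = 0 ∨ s j = 1) (α : ι → ℝ) :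
    ∑ j, ((X * diagonal s)ᵀ *ᵥ α) j ^ 2 = ∑ j, s j * (Xᵀ *ᵥ α) j ^ 2 := by
  rw [transpose_mul, diagonal_transpose, ← mulVec_mulVec]
  refine Finset.sum_congr rfl fun j _ => ?_
  rw [mulVec_diagonal]
  rcases hs j with h | h <;> simp [h]

variable {X}

theorem ridgeObjective_le_ridgeObjective_mul_diagonal [Fintype ι] {ℓ : ι → ℝ → ℝ} {γ : ℝ}
    (hγ : 0 ≤ γ) (hs : ∀ j, s j = 0 ∨ s j = 1) (w : κ → ℝ) :
    ridgeObjective X ℓ γ (s * w) ≤ ridgeObjective (X * diagonal s) ℓ γ w := by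
  have hsq : ∑ j, (s * w) j ^ 2 ≤ ∑ j, w j ^ 2 :=
    Finset.sum_le_sum fun j _ => by rcases hs j with h | h <;> simp [h, sq_nonneg]
  rw [ridgeObjective, ridgeObjective, mul_diagonal_mulVec]
  exact add_le_add_right (mul_le_mul_of_nonneg_left hsq (by positivity)) _

theorem ridgeObjective_mul_diagonal_of_mul_eq [Fintype ι] {ℓ : ι → ℝ → ℝ} {γ : ℝ} {w : κ → ℝ}
    (h : s * w = w) : ridgeObjective (X * diagonal s) ℓ γ w = ridgeObjective X ℓ γ w := by
  rw [ridgeObjective, ridgeObjective, mul_diagonal_mulVec, h]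

end SupportPattern

theorem norm0_eq_sum_ite {p : ℕ} (w : Fin p → ℝ) :
    (norm0 w : ℝ) = ∑ j, if w j = 0 then 0 else 1 := by
  classical
  simp [norm0, Finset.natCast_card_filter, ite_not]

theorem norm0_mul_le_sum {p : ℕ} {s : Fin p → ℝ} (hs : ∀ j, s j = 0 ∨ s j = 1) (w : Fin p → ℝ) :
    (norm0 (s * w) : ℝ) ≤ ∑ j, s j := by
  rw [norm0_eq_sum_ite]
  gcongr with j
  rcases hs j with h | h <;> split_ifs <;> simp_all

/-- The ℓ₂-regularized cardinality-penalized problem has the same optimal value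
as the penalized convex integer min-max problem. -/
theorem sparse_regression_penalized_cio_equiv
    {n p : ℕ}
    (X : Matrix (Fin n) (Fin p) ℝ) (y : Fin n → ℝ)
    (γ : ℝ) (hγ : 0 < γ) (lam : ℝ) (hlam : 0 < lam)
    (ℓ : ℝ → ℝ → ℝ) (hconv : ∀ z : ℝ, ConvexOn ℝ Set.univ (ℓ z))
    (lhat : ℝ → ℝ → EReal)
    (hlhat : ∀ z a : ℝ, lhat z a = ⨆ u : ℝ, ((u * a - ℓ z u : ℝ) : EReal))
    (f : (Fin n → ℝ) → (Fin p → ℝ) → EReal)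
    (hf : ∀ α s, f α s =
      -(∑ i, lhat (y i) (α i))
        - ((γ / 2 * ∑ j, s j * (∑ i, X i j * α i) ^ 2 : ℝ) : EReal)) :
    (⨅ w : Fin p → ℝ,
        ((∑ i, ℓ (y i) (∑ j, X i j * w j)
            + 1 / (2 * γ) * ∑ j, (w j) ^ 2 + lam * (norm0 w : ℝ) : ℝ) : EReal))
      =
    (⨅ s : {s : Fin p → ℝ // ∀ j, s j = 0 ∨ s j = 1},
        ⨆ α : Fin n → ℝ, f α s.1 + ((lam * ∑ j, s.1 j : ℝ) : EReal)) := by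
  set L : Fin n → ℝ → ℝ := fun i => ℓ (y i)
  have hdual : ∀ s : {s : Fin p → ℝ // ∀ j, s j = 0 ∨ s j = 1},
      ⨆ α, f α s.1 + ((lam * ∑ j, s.1 j : ℝ) : EReal) =
        (⨅ w, (ridgeObjective (X * diagonal s.1) L γ w : EReal)) +
          ((lam * ∑ j, s.1 j : ℝ) : EReal) := by
    rintro ⟨s, hs⟩
    rw [EReal.iSup_add_coe, ← ridge_duality (fun i => hconv (y i)) hγ]
    congr 1
    refine iSup_congr fun α => ?_
    rw [hf, ridgeDual, sum_sq_transpose_mul_diagonal_mulVec X hs]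
    simp only [hlhat, fenchelConj]
    rfl
  refine le_antisymm (le_iInf fun s => ?_) (le_iInf fun w => ?_)
  · rw [hdual, ← EReal.iInf_add_coe]
    refine le_iInf fun w => (iInf_le _ (s.1 * w)).trans ?_
    rw [← EReal.coe_add, EReal.coe_le_coe_iff]
    exact add_le_add (ridgeObjective_le_ridgeObjective_mul_diagonal (X := X) hγ.le s.2 w)
      (mul_le_mul_of_nonneg_left (norm0_mul_le_sum s.2 w) hlam.le)
  · set s : Fin p → ℝ := fun j => if w j = 0 then 0 else 1
    have hs : ∀ j, s j = 0 ∨ s j = 1 := fun j => by by_cases h : w j = 0 <;> simp [s, h]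
    have hsw : s * w = w := funext fun j => by by_cases h : w j = 0 <;> simp [s, h]
    refine (iInf_le _ ⟨s, hs⟩).trans ?_
    rw [hdual]
    refine (add_le_add_left (iInf_le _ w) _).trans_eq ?_
    rw [ridgeObjective_mul_diagonal_of_mul_eq hsw, ← EReal.coe_add, norm0_eq_sum_ite]
    rfl
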